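/- arXiv:1808.04747 — 2 statements merged into one kernel-verified Lean document; each statement's English description precedes it below -/
import Mathlib

section
/- Monotone convergence of the penalty approximations: fix a switching cost c ≥ 0, and for each ρ ≥ 0 let u^ρ ∈ ℝ^{N×d} denote the unique solution of the penalized equation with penalty parameter ρ and switching cost c. Then the map ρ ↦ u^ρ is componentwise nondecreasing, and there exists u ∈ ℝ^{N×d} with u^ρ ≤ u for all ρ ≥ 0 such that u^ρ converges componentwise to u as ρ → ∞. Moreover, if c > 0 then u satisfies the QVI: min(F_i(u)_l, u^i_l − (M_i u)_l) = 0 for all i ∈ I, l ∈ {1,…,N}. -/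
open Filter Topology

noncomputable section

/-- A monotone system with constant `γ`: whenever `u i l - v i l` is the (nonnegative)
maximum of all differences, `F u i l - F v i l ≥ γ (u i l - v i l)`. -/
def IsMonotoneSystem {N d : ℕ} (γ : ℝ)
    (F : (Fin d → Fin N → ℝ) → Fin d → Fin N → ℝ) : Prop :=
  ∀ u v : Fin d → Fin N → ℝ, ∀ i : Fin d, ∀ l : Fin N,
    (∀ (j : Fin d) (k : Fin N), u j k - v j k ≤ u i l - v i l) →
    0 ≤ u i l - v i l →
    γ * (u i l - v i l) ≤ F u i l - F v i l

/-- The intervention operator `(M_i u)_l = max_{j ≠ i} (u j l - c)`. -/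
def Mop {N d : ℕ} (c : ℝ) (u : Fin d → Fin N → ℝ) (i : Fin d) (l : Fin N) : ℝ :=
  ⨆ j : {j : Fin d // j ≠ i}, (u j l - c)

/-- The sup-norm `‖u‖ = max_{i,l} |u i l|`. -/
def supNorm {N d : ℕ} (u : Fin d → Fin N → ℝ) : ℝ :=
  ⨆ p : Fin d × Fin N, |u p.1 p.2|

/-- A penalty function: continuous, non-decreasing, vanishing on `(-∞,0]` and
positive on `(0,∞)`. -/
def IsPenaltyFunction (π : ℝ → ℝ) : Prop :=
  Continuous π ∧ Monotone π ∧ (∀ y : ℝ, y ≤ 0 → π y = 0) ∧ (∀ y : ℝ, 0 < y → 0 < π y)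

/-- A concave system: each `F_i` is concave (componentwise). -/
def IsConcaveSystem {N d : ℕ}
    (F : (Fin d → Fin N → ℝ) → Fin d → Fin N → ℝ) : Prop :=
  ∀ (i : Fin d) (u v : Fin d → Fin N → ℝ) (θ : ℝ), 0 ≤ θ → θ ≤ 1 → ∀ l : Fin N,
    θ * F u i l + (1 - θ) * F v i l ≤ F (fun j k => θ * u j k + (1 - θ) * v j k) i l

/-!
Monotonicity of `F` gives a comparison principle: if `F u ≤ F v` wherever `u - v` attains a
positive maximum, then `u ≤ v`. At such a point the penalty of `u` is at most that of `v`, so the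
penalized solutions increase with `ρ`; and at a maximum of a solution its penalty vanishes
(as `c ≥ 0`), so all solutions lie below any constant `B` with `F B ≥ 0`. Hence they converge monotonically to
some `u`. In the limit `F u ≥ 0`; a violated obstacle `u^j_l - c > u^i_l` would make
`F_i (U ρ)_l ≥ ρ π(δ)` blow up; and where the obstacle is strict the penalty vanishes for large
`ρ`, so `F_i (u)_l = 0`.
-/

open Finset

theorem MonotoneOn.exists_tendsto_atTop_of_le {α β : Type*} [LinearOrder α]
    [ConditionallyCompleteLinearOrder β] [TopologicalSpace β] [OrderTopology β]
    {f : α → β} {x₀ : α} {B : β} (hf : MonotoneOn f (Set.Ici x₀))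
    (hB : ∀ x, x₀ ≤ x → f x ≤ B) :
    ∃ a, (∀ x, x₀ ≤ x → f x ≤ a) ∧ Tendsto f atTop (𝓝 a) := by
  set g : α → β := fun x => f (max x x₀)
  have hg : Monotone g := fun x y hxy =>
    hf (le_max_right x x₀) (le_max_right y x₀) (max_le_max_right x₀ hxy)
  have hgB : BddAbove (Set.range g) := ⟨B, by rintro _ ⟨x, rfl⟩; exact hB _ (le_max_right x x₀)⟩
  have hfg : ∀ x, x₀ ≤ x → f x = g x := fun x hx => by simp only [g, max_eq_left hx]
  refine ⟨⨆ x, g x, fun x hx => (hfg x hx).trans_le (le_ciSup hgB x), ?_⟩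
  refine (tendsto_atTop_ciSup hg hgB).congr' ?_
  filter_upwards [eventually_ge_atTop x₀] with x hx using (hfg x hx).symm

theorem IsPenaltyFunction.nonneg {π : ℝ → ℝ} (hπ : IsPenaltyFunction π) (y : ℝ) : 0 ≤ π y := by
  rcases le_or_gt y 0 with hy | hy
  · exact (hπ.2.2.1 y hy).ge
  · exact (hπ.2.2.2 y hy).le

section

variable {N d : ℕ}

def penalty (π : ℝ → ℝ) (c : ℝ) (u : Fin d → Fin N → ℝ) (i : Fin d) (l : Fin N) : ℝ :=
  ∑ j ∈ univ.erase i, π (u j l - c - u i l)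

def IsPenalizedSolution (F : (Fin d → Fin N → ℝ) → Fin d → Fin N → ℝ) (π : ℝ → ℝ) (c ρ : ℝ)
    (u : Fin d → Fin N → ℝ) : Prop :=
  ∀ i l, F u i l = ρ * penalty π c u i l

variable {π : ℝ → ℝ} {c : ℝ}

theorem penalty_nonneg (hπ : IsPenaltyFunction π) (u : Fin d → Fin N → ℝ) (i : Fin d)
    (l : Fin N) : 0 ≤ penalty π c u i l :=
  sum_nonneg fun _ _ => hπ.nonneg _

theorem le_penalty (hπ : IsPenaltyFunction π) (u : Fin d → Fin N → ℝ) {i j : Fin d}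
    (hji : j ≠ i) (l : Fin N) : π (u j l - c - u i l) ≤ penalty π c u i l :=
  single_le_sum (f := fun k => π (u k l - c - u i l)) (fun _ _ => hπ.nonneg _)
    (mem_erase.2 ⟨hji, mem_univ j⟩)

theorem penalty_eq_zero (hπ : IsPenaltyFunction π) {u : Fin d → Fin N → ℝ} {i : Fin d}
    {l : Fin N} (h : ∀ j, j ≠ i → u j l - c ≤ u i l) : penalty π c u i l = 0 :=
  sum_eq_zero fun j hj => hπ.2.2.1 _ (by linarith [h j (mem_erase.1 hj).1])

theorem penalty_le_penalty_of_max_sub (hπ : IsPenaltyFunction π) {u v : Fin d → Fin N → ℝ}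
    {i : Fin d} {l : Fin N} (hmax : ∀ j k, u j k - v j k ≤ u i l - v i l) :
    penalty π c u i l ≤ penalty π c v i l :=
  sum_le_sum fun j _ => hπ.2.1 (by linarith [hmax j l])

end

section

variable {N d : ℕ} {γ : ℝ} {F : (Fin d → Fin N → ℝ) → Fin d → Fin N → ℝ}

theorem IsMonotoneSystem.le_of_apply_le_at_max_sub (hγ : 0 < γ) (hF : IsMonotoneSystem γ F)
    {u v : Fin d → Fin N → ℝ}
    (h : ∀ i l, (∀ j k, u j k - v j k ≤ u i l - v i l) → 0 < u i l - v i l → F u i l ≤ F v i l)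
    (i : Fin d) (l : Fin N) : u i l ≤ v i l := by
  by_contra! hlt
  have : Nonempty (Fin d × Fin N) := ⟨(i, l)⟩
  obtain ⟨⟨p, q⟩, hmax⟩ := Finite.exists_max fun x : Fin d × Fin N => u x.1 x.2 - v x.1 x.2
  have hmax' : ∀ j k, u j k - v j k ≤ u p q - v p q := fun j k => hmax (j, k)
  have hpos : 0 < u p q - v p q := (sub_pos.2 hlt).trans_le (hmax' i l)
  nlinarith [hF u v p q hmax' hpos.le, h p q hmax' hpos, mul_pos hγ hpos]

theorem IsMonotoneSystem.exists_const_apply_nonneg (hγ : 0 < γ) (hF : IsMonotoneSystem γ F) :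
    ∃ B : ℝ, ∀ i l, 0 ≤ F (fun _ _ => B) i l := by
  obtain ⟨a, ha⟩ := (Set.finite_range fun x : Fin d × Fin N => F 0 x.1 x.2).bddBelow
  refine ⟨max 0 (-a / γ), fun i l => ?_⟩
  have hmono := hF (fun _ _ => max 0 (-a / γ)) 0 i l (fun _ _ => le_rfl) (by simp)
  have hFa : a ≤ F 0 i l := ha ⟨(i, l), rfl⟩
  have hγB : -a ≤ γ * max 0 (-a / γ) := (div_le_iff₀' hγ).1 (le_max_right _ _)
  simp only [Pi.zero_apply, sub_zero] at hmono
  linarith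

variable {π : ℝ → ℝ} {c : ℝ}

theorem IsPenalizedSolution.le_of_param_le (hγ : 0 < γ) (hF : IsMonotoneSystem γ F)
    (hπ : IsPenaltyFunction π) {ρ₁ ρ₂ : ℝ} (hρ₁ : 0 ≤ ρ₁) (hρ : ρ₁ ≤ ρ₂)
    {u v : Fin d → Fin N → ℝ} (hu : IsPenalizedSolution F π c ρ₁ u)
    (hv : IsPenalizedSolution F π c ρ₂ v) (i : Fin d) (l : Fin N) : u i l ≤ v i l := by
  refine hF.le_of_apply_le_at_max_sub hγ (fun i l hmax _ => ?_) i l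
  calc F u i l = ρ₁ * penalty π c u i l := hu i l
    _ ≤ ρ₂ * penalty π c u i l := mul_le_mul_of_nonneg_right hρ (penalty_nonneg hπ u i l)
    _ ≤ ρ₂ * penalty π c v i l :=
      mul_le_mul_of_nonneg_left (penalty_le_penalty_of_max_sub hπ hmax) (hρ₁.trans hρ)
    _ = F v i l := (hv i l).symm

theorem IsPenalizedSolution.le_const (hγ : 0 < γ) (hF : IsMonotoneSystem γ F)
    (hπ : IsPenaltyFunction π) (hc : 0 ≤ c) {ρ B : ℝ} {u : Fin d → Fin N → ℝ}
    (hu : IsPenalizedSolution F π c ρ u) (hB : ∀ i l, 0 ≤ F (fun _ _ => B) i l)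
    (i : Fin d) (l : Fin N) : u i l ≤ B := by
  refine hF.le_of_apply_le_at_max_sub (v := fun _ _ => B) hγ (fun i l hmax _ => ?_) i l
  have hpen : penalty π c u i l = 0 :=
    penalty_eq_zero hπ fun j _ => by linarith [hmax j l]
  rw [hu i l, hpen, mul_zero]
  exact hB i l

end

section

variable {N d : ℕ}

theorem le_Mop {c : ℝ} (u : Fin d → Fin N → ℝ) {i j : Fin d} (hji : j ≠ i) (l : Fin N) :
    u j l - c ≤ Mop c u i l :=
  le_ciSup (f := fun j : {j // j ≠ i} => u j l - c) (Set.finite_range _).bddAbove ⟨j, hji⟩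

theorem Mop_le {c x : ℝ} (hd : 1 < d) {u : Fin d → Fin N → ℝ} {i : Fin d} {l : Fin N}
    (h : ∀ j, j ≠ i → u j l - c ≤ x) : Mop c u i l ≤ x := by
  obtain ⟨j, hj⟩ := Fintype.exists_ne_of_one_lt_card (by rwa [Fintype.card_fin]) i
  have : Nonempty {j // j ≠ i} := ⟨⟨j, hj⟩⟩
  exact ciSup_le fun j => h j j.2

variable {F : (Fin d → Fin N → ℝ) → Fin d → Fin N → ℝ} {π : ℝ → ℝ} {c : ℝ}
  {U : ℝ → Fin d → Fin N → ℝ} {u : Fin d → Fin N → ℝ}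

theorem apply_nonneg_of_tendsto_isPenalizedSolution (hπ : IsPenaltyFunction π)
    (hU : ∀ ρ, 0 ≤ ρ → IsPenalizedSolution F π c ρ (U ρ))
    (hFU : Tendsto (fun ρ => F (U ρ)) atTop (𝓝 (F u))) (i : Fin d) (l : Fin N) :
    0 ≤ F u i l := by
  refine ge_of_tendsto ((hFU.apply_nhds i).apply_nhds l) ?_
  filter_upwards [eventually_ge_atTop 0] with ρ hρ
  rw [hU ρ hρ i l]
  exact mul_nonneg hρ (penalty_nonneg hπ _ i l)

/-- The limit satisfies the obstacle constraint `M_i u ≤ u_i`: otherwise the penalty would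
force `F_i (U ρ)` to grow like `ρ`. -/
theorem sub_le_of_tendsto_isPenalizedSolution (hπ : IsPenaltyFunction π)
    (hU : ∀ ρ, 0 ≤ ρ → IsPenalizedSolution F π c ρ (U ρ)) (hUu : Tendsto U atTop (𝓝 u))
    (hFU : Tendsto (fun ρ => F (U ρ)) atTop (𝓝 (F u))) {i j : Fin d} (hji : j ≠ i)
    (l : Fin N) : u j l - c ≤ u i l := by
  by_contra! hlt
  set δ := u j l - c - u i l
  have hδ : 0 < δ := by linarith
  have hgap : Tendsto (fun ρ => U ρ j l - c - U ρ i l) atTop (𝓝 δ) :=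
    (((hUu.apply_nhds j).apply_nhds l).sub_const c).sub ((hUu.apply_nhds i).apply_nhds l)
  have hgrow : ∀ᶠ ρ in atTop, ρ * π (δ / 2) ≤ F (U ρ) i l := by
    filter_upwards [hgap.eventually (eventually_gt_nhds (half_lt_self hδ)),
      eventually_ge_atTop 0] with ρ hgapρ hρ
    rw [hU ρ hρ i l]
    exact mul_le_mul_of_nonneg_left ((hπ.2.1 hgapρ.le).trans (le_penalty hπ _ hji l)) hρ
  have hlin : Tendsto (fun ρ : ℝ => ρ * π (δ / 2)) atTop atTop :=
    tendsto_id.atTop_mul_const (hπ.2.2.2 _ (half_pos hδ))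
  exact not_tendsto_atTop_of_tendsto_nhds ((hFU.apply_nhds i).apply_nhds l)
    (tendsto_atTop_mono' atTop hgrow hlin)

theorem apply_eq_zero_of_tendsto_isPenalizedSolution (hπ : IsPenaltyFunction π)
    (hU : ∀ ρ, 0 ≤ ρ → IsPenalizedSolution F π c ρ (U ρ)) (hUu : Tendsto U atTop (𝓝 u))
    (hFU : Tendsto (fun ρ => F (U ρ)) atTop (𝓝 (F u))) {i : Fin d} {l : Fin N}
    (h : ∀ j, j ≠ i → u j l - c < u i l) : F u i l = 0 := by
  have hgap : ∀ j, ∀ᶠ ρ in atTop, j ≠ i → U ρ j l - c ≤ U ρ i l := fun j => by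
    by_cases hji : j = i
    · exact .of_forall fun _ hne => absurd hji hne
    have hlim : Tendsto (fun ρ => U ρ j l - c - U ρ i l) atTop (𝓝 (u j l - c - u i l)) :=
      (((hUu.apply_nhds j).apply_nhds l).sub_const c).sub ((hUu.apply_nhds i).apply_nhds l)
    filter_upwards [hlim.eventually (eventually_lt_nhds (sub_neg.2 (h j hji)))] with ρ hρ _
    linarith
  have hzero : ∀ᶠ ρ in atTop, F (U ρ) i l = 0 := by
    filter_upwards [eventually_all.2 hgap, eventually_ge_atTop 0] with ρ hgapρ hρ
    rw [hU ρ hρ i l, penalty_eq_zero hπ hgapρ, mul_zero]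
  exact tendsto_nhds_unique ((hFU.apply_nhds i).apply_nhds l)
    (tendsto_const_nhds.congr' (hzero.mono fun _ h => h.symm))

theorem min_apply_sub_Mop_eq_zero_of_tendsto_isPenalizedSolution (hd : 1 < d)
    (hπ : IsPenaltyFunction π) (hU : ∀ ρ, 0 ≤ ρ → IsPenalizedSolution F π c ρ (U ρ))
    (hUu : Tendsto U atTop (𝓝 u)) (hF : Continuous F) (i : Fin d) (l : Fin N) :
    min (F u i l) (u i l - Mop c u i l) = 0 := by
  have hFU : Tendsto (fun ρ => F (U ρ)) atTop (𝓝 (F u)) := (hF.tendsto u).comp hUu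
  have hFu := apply_nonneg_of_tendsto_isPenalizedSolution hπ hU hFU i l
  have hMu : Mop c u i l ≤ u i l :=
    Mop_le hd fun j hji => sub_le_of_tendsto_isPenalizedSolution hπ hU hUu hFU hji l
  rcases hMu.eq_or_lt with heq | hlt
  · rw [heq, sub_self, min_eq_right hFu]
  · rw [apply_eq_zero_of_tendsto_isPenalizedSolution hπ hU hUu hFU
      fun j hji => (le_Mop u hji l).trans_lt hlt, min_eq_left (sub_nonneg.2 hMu)]

end

theorem penalized_monotone_convergence_general {N d : ℕ} (hd : 2 ≤ d)
    (γ : ℝ) (hγ : 0 < γ)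
    (F : (Fin d → Fin N → ℝ) → Fin d → Fin N → ℝ)
    (hFcont : Continuous F) (hFmono : IsMonotoneSystem γ F)
    (π : ℝ → ℝ) (hπ : IsPenaltyFunction π)
    (c : ℝ) (hc : 0 ≤ c)
    (U : ℝ → Fin d → Fin N → ℝ)
    (hU : ∀ ρ : ℝ, 0 ≤ ρ → ∀ i l,
      F (U ρ) i l - ρ * ∑ j ∈ Finset.univ.erase i, π (U ρ j l - c - U ρ i l) = 0) :
    (∀ ρ₁ ρ₂ : ℝ, 0 ≤ ρ₁ → ρ₁ ≤ ρ₂ → ∀ i l, U ρ₁ i l ≤ U ρ₂ i l) ∧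
    ∃ u : Fin d → Fin N → ℝ,
      (∀ ρ : ℝ, 0 ≤ ρ → ∀ i l, U ρ i l ≤ u i l) ∧
      (∀ i l, Filter.Tendsto (fun ρ => U ρ i l) Filter.atTop (nhds (u i l))) ∧
      (0 < c → ∀ i l, min (F u i l) (u i l - Mop c u i l) = 0) := by
  have hsol : ∀ ρ, 0 ≤ ρ → IsPenalizedSolution F π c ρ (U ρ) := fun ρ hρ i l =>
    sub_eq_zero.1 (hU ρ hρ i l)
  have hmono : ∀ ρ₁ ρ₂ : ℝ, 0 ≤ ρ₁ → ρ₁ ≤ ρ₂ → ∀ i l, U ρ₁ i l ≤ U ρ₂ i l :=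
    fun ρ₁ ρ₂ hρ₁ hρ => (hsol ρ₁ hρ₁).le_of_param_le hγ hFmono hπ hρ₁ hρ (hsol ρ₂ (hρ₁.trans hρ))
  obtain ⟨B, hB⟩ := hFmono.exists_const_apply_nonneg hγ
  have hlim : ∀ i l, ∃ a, (∀ ρ, 0 ≤ ρ → U ρ i l ≤ a) ∧ Tendsto (U · i l) atTop (𝓝 a) :=
    fun i l => MonotoneOn.exists_tendsto_atTop_of_le
      (fun ρ₁ hρ₁ ρ₂ _ hρ => hmono ρ₁ ρ₂ hρ₁ hρ i l)
      (fun ρ hρ => (hsol ρ hρ).le_const hγ hFmono hπ hc hB i l)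
  choose u hle htend using hlim
  refine ⟨hmono, u, fun ρ hρ i l => hle i l ρ hρ, htend, fun _ => ?_⟩
  exact min_apply_sub_Mop_eq_zero_of_tendsto_isPenalizedSolution hd hπ hsol
    (tendsto_pi_nhds.2 fun i => tendsto_pi_nhds.2 (htend i)) hFcont

/-- Monotone convergence of the penalty approximations as `ρ → ∞`, and the limit solves
the QVI when the switching cost is positive. -/
theorem penalized_monotone_convergence {N d : ℕ} (hN : 1 ≤ N) (hd : 2 ≤ d)
    (γ : ℝ) (hγ : 0 < γ)
    (F : (Fin d → Fin N → ℝ) → Fin d → Fin N → ℝ)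
    (hFcont : Continuous F) (hFmono : IsMonotoneSystem γ F)
    (π : ℝ → ℝ) (hπ : IsPenaltyFunction π)
    (c : ℝ) (hc : 0 ≤ c)
    (U : ℝ → Fin d → Fin N → ℝ)
    (hU : ∀ ρ : ℝ, 0 ≤ ρ → ∀ i l,
      F (U ρ) i l - ρ * ∑ j ∈ Finset.univ.erase i, π (U ρ j l - c - U ρ i l) = 0) :
    (∀ ρ₁ ρ₂ : ℝ, 0 ≤ ρ₁ → ρ₁ ≤ ρ₂ → ∀ i l, U ρ₁ i l ≤ U ρ₂ i l) ∧
    ∃ u : Fin d → Fin N → ℝ,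
      (∀ ρ : ℝ, 0 ≤ ρ → ∀ i l, U ρ i l ≤ u i l) ∧
      (∀ i l, Filter.Tendsto (fun ρ => U ρ i l) Filter.atTop (nhds (u i l))) ∧
      (0 < c → ∀ i l, min (F u i l) (u i l - Mop c u i l) = 0) :=
  penalized_monotone_convergence_general hd γ hγ F hFcont hFmono π hπ c hc U hU
end
end

section
/- Existence and uniqueness of strict supersolutions: let c > 0 and 0 < κ < c. Then there exists a unique w ∈ ℝ^{N×d} such that min(F_i(w)_l, w^i_l − (M_i w)_l) = κ for all i ∈ I and l ∈ {1,…,N}, and this w satisfies ‖w‖ ≤ (‖F(0)‖ + κ)/γ. -/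
open Filter Topology

noncomputable section

/-! Write `G(w)_{il} = min (F_i(w)_l, w^i_l - (M_i w)_l)`. Since `(M_i w)_l` does not involve
the entry `w^i_l`, `G(w)_{il}` grows at rate at least `min γ 1` in `w^i_l` and is nondecreasing in
the other entries. Hence the equation `G(w)_{il} = κ` can be solved for the entry `w^i_l` alone,
and the resulting map `T` is monotone; it maps the order interval between the constants
`±(‖F(0)‖ + κ)/γ` into itself, so Tarski's theorem gives a fixed point, which solves `G(w) = κ`.

Uniqueness is a comparison principle. At an entry where `u - v` is maximal, and `u` is largest
among such entries, a subsolution `u` cannot exceed a supersolution `v`: the `F` branch is excluded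
by monotonicity, and the switching branch would produce an entry `(j, l)` with the same value of
`u - v` and with `u^j_l = u^i_l + c - κ > u^i_l`. -/

theorem Monotone.exists_isFixedPt_Icc {α : Type*} [ConditionallyCompleteLattice α]
    {f : α → α} (hf : Monotone f) {a b : α} (hab : a ≤ b) (ha : a ≤ f a) (hb : f b ≤ b) :
    ∃ x ∈ Set.Icc a b, f x = x := by
  have : Fact (a ≤ b) := ⟨hab⟩
  let g : Set.Icc a b →o Set.Icc a b :=
    ⟨fun x => ⟨f x, ha.trans (hf x.2.1), (hf x.2.2).trans hb⟩, fun _ _ h => hf h⟩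
  exact ⟨g.lfp, g.lfp.2, congrArg Subtype.val g.map_lfp⟩

theorem Finite.exists_max_lex {α β γ : Type*} [Finite α] [Nonempty α] [LinearOrder β]
    [LinearOrder γ] (f : α → β) (g : α → γ) :
    ∃ x, ∀ y, f y ≤ f x ∧ (f y = f x → g y ≤ g x) := by
  obtain ⟨x, hx⟩ := Finite.exists_max fun y => toLex (f y, g y)
  exact ⟨x, fun y => Prod.Lex.toLex_le_toLex'.1 (hx y)⟩

theorem Continuous.surjective_of_forall_mul_sub_le {f : ℝ → ℝ} (hf : Continuous f) {γ : ℝ}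
    (hγ : 0 < γ) (hgap : ∀ s t, s ≤ t → γ * (t - s) ≤ f t - f s) : Function.Surjective f := by
  have hline : Tendsto (fun t => f 0 + γ * t) atTop atTop :=
    tendsto_atTop_add_const_left _ _ (tendsto_id.const_mul_atTop hγ)
  have hline' : Tendsto (fun t => f 0 + γ * t) atBot atBot :=
    tendsto_atBot_add_const_left _ _ (tendsto_id.const_mul_atBot hγ)
  refine hf.surjective (tendsto_atTop_mono' atTop ?_ hline) (tendsto_atBot_mono' atBot ?_ hline')
  · filter_upwards [eventually_ge_atTop 0] with t ht
    linarith [hgap 0 t ht]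
  · filter_upwards [eventually_le_atBot 0] with t ht
    linarith [hgap t 0 ht]

variable {N d : ℕ}

theorem nonempty_ne_of_two_le (hd : 2 ≤ d) (i : Fin d) : Nonempty {j // j ≠ i} :=
  have := Fin.nontrivial_iff_two_le.2 hd
  nonempty_subtype.2 (exists_ne i)

theorem sub_le_Mop (c : ℝ) (u : Fin d → Fin N → ℝ) {i j : Fin d} (l : Fin N) (hj : j ≠ i) :
    u j l - c ≤ Mop c u i l :=
  le_ciSup (f := fun j : {j // j ≠ i} => u j l - c) (Set.finite_range _).bddAbove ⟨j, hj⟩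

theorem exists_Mop_eq (hd : 2 ≤ d) (c : ℝ) (u : Fin d → Fin N → ℝ) (i : Fin d) (l : Fin N) :
    ∃ j ≠ i, Mop c u i l = u j l - c := by
  have := nonempty_ne_of_two_le hd i
  obtain ⟨⟨j, hj⟩, hmax⟩ := exists_eq_ciSup_of_finite (f := fun j : {j // j ≠ i} => u j l - c)
  exact ⟨j, hj, hmax.symm⟩

theorem Mop_mono (c : ℝ) {u v : Fin d → Fin N → ℝ} (huv : u ≤ v) (i : Fin d) (l : Fin N) :
    Mop c u i l ≤ Mop c v i l :=
  ciSup_mono (Set.finite_range _).bddAbove fun j => by linarith [huv j l]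

theorem Mop_const (hd : 2 ≤ d) (c R : ℝ) (i : Fin d) (l : Fin N) :
    Mop c (fun _ _ => R) i l = R - c :=
  have := nonempty_ne_of_two_le hd i
  ciSup_const

def updateEntry (w : Fin d → Fin N → ℝ) (i : Fin d) (l : Fin N) (t : ℝ) : Fin d → Fin N → ℝ :=
  Function.update w i (Function.update (w i) l t)

@[simp]
theorem updateEntry_apply_self (w : Fin d → Fin N → ℝ) (i : Fin d) (l : Fin N) (t : ℝ) :
    updateEntry w i l t i l = t := by
  simp [updateEntry]

@[simp]
theorem updateEntry_eq_self (w : Fin d → Fin N → ℝ) (i : Fin d) (l : Fin N) :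
    updateEntry w i l (w i l) = w := by
  simp [updateEntry]

theorem updateEntry_of_ne (w : Fin d → Fin N → ℝ) {i j : Fin d} (l : Fin N) (t : ℝ)
    (hj : j ≠ i) : updateEntry w i l t j = w j :=
  Function.update_of_ne hj _ _

theorem continuous_updateEntry (w : Fin d → Fin N → ℝ) (i : Fin d) (l : Fin N) :
    Continuous (updateEntry w i l) :=
  continuous_const.update i (continuous_const.update l continuous_id)

theorem updateEntry_sub_updateEntry_le {u v : Fin d → Fin N → ℝ} (huv : u ≤ v) (i : Fin d)
    (l : Fin N) {s t : ℝ} (hst : s ≤ t) (j : Fin d) (k : Fin N) :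
    updateEntry u i l t j k - updateEntry v i l s j k ≤ t - s := by
  by_cases hj : j = i
  · subst hj
    by_cases hk : k = l
    · subst hk; simp
    · simp only [updateEntry, Function.update_self, Function.update_of_ne hk]
      linarith [huv j k]
  · rw [updateEntry_of_ne _ _ _ hj, updateEntry_of_ne _ _ _ hj]; linarith [huv j k]

theorem Mop_updateEntry (c : ℝ) (w : Fin d → Fin N → ℝ) (i : Fin d) (l : Fin N) (t : ℝ) :
    Mop c (updateEntry w i l t) i l = Mop c w i l := by
  simp only [Mop]
  congr 1
  funext ⟨j, hj⟩
  rw [updateEntry_of_ne _ _ _ hj]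

theorem abs_le_supNorm (u : Fin d → Fin N → ℝ) (i : Fin d) (l : Fin N) : |u i l| ≤ supNorm u :=
  le_ciSup (f := fun p : Fin d × Fin N => |u p.1 p.2|) (Set.finite_range _).bddAbove (i, l)

theorem supNorm_nonneg (u : Fin d → Fin N → ℝ) : 0 ≤ supNorm u :=
  Real.iSup_nonneg fun _ => abs_nonneg _

theorem supNorm_le {u : Fin d → Fin N → ℝ} {R : ℝ} (hR : 0 ≤ R) (h : ∀ i l, |u i l| ≤ R) :
    supNorm u ≤ R :=
  Real.iSup_le (fun p => h p.1 p.2) hR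

section QVI

variable {γ c κ : ℝ} {F : (Fin d → Fin N → ℝ) → Fin d → Fin N → ℝ}

/-- The left-hand side `min (F_i(w)_l, w^i_l - (M_i w)_l)` of the switching system. -/
def qviOp (c : ℝ) (F : (Fin d → Fin N → ℝ) → Fin d → Fin N → ℝ) (w : Fin d → Fin N → ℝ)
    (i : Fin d) (l : Fin N) : ℝ :=
  min (F w i l) (w i l - Mop c w i l)

theorem IsMonotoneSystem.mul_le_sub_of_sub_eq_const (hF : IsMonotoneSystem γ F)
    {u v : Fin d → Fin N → ℝ} {R : ℝ} (hR : 0 ≤ R) (huv : ∀ j k, u j k - v j k = R)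
    (i : Fin d) (l : Fin N) : γ * R ≤ F u i l - F v i l := by
  have h := hF u v i l (fun j k => by rw [huv, huv]) (by rw [huv]; exact hR)
  rwa [huv] at h

theorem IsMonotoneSystem.mul_sub_le_updateEntry (hF : IsMonotoneSystem γ F)
    {u v : Fin d → Fin N → ℝ} (huv : u ≤ v) (i : Fin d) (l : Fin N) {s t : ℝ} (hst : s ≤ t) :
    γ * (t - s) ≤ F (updateEntry u i l t) i l - F (updateEntry v i l s) i l := by
  have h := hF (updateEntry u i l t) (updateEntry v i l s) i l
    (by simpa using updateEntry_sub_updateEntry_le huv i l hst) (by simpa using hst)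
  simpa using h

theorem min_mul_sub_le_qviOp_updateEntry (hF : IsMonotoneSystem γ F)
    {u v : Fin d → Fin N → ℝ} (huv : u ≤ v) (i : Fin d) (l : Fin N) {s t : ℝ} (hst : s ≤ t) :
    min γ 1 * (t - s) ≤
      qviOp c F (updateEntry u i l t) i l - qviOp c F (updateEntry v i l s) i l := by
  have hFgap := hF.mul_sub_le_updateEntry huv i l hst
  have hMop := Mop_mono c huv i l
  have h_le_γ : min γ 1 * (t - s) ≤ γ * (t - s) :=
    mul_le_mul_of_nonneg_right (min_le_left _ _) (sub_nonneg.2 hst)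
  have h_le_one : min γ 1 * (t - s) ≤ 1 * (t - s) :=
    mul_le_mul_of_nonneg_right (min_le_right _ _) (sub_nonneg.2 hst)
  simp only [qviOp, Mop_updateEntry, updateEntry_apply_self]
  rw [le_sub_iff_add_le]
  refine le_min ?_ ?_
  · linarith [min_le_left (F (updateEntry v i l s) i l) (s - Mop c v i l)]
  · linarith [min_le_right (F (updateEntry v i l s) i l) (s - Mop c v i l)]

theorem le_of_qviOp_updateEntry_le (hγ : 0 < γ) (hF : IsMonotoneSystem γ F)
    {u v : Fin d → Fin N → ℝ} (huv : u ≤ v) {i : Fin d} {l : Fin N} {s t : ℝ}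
    (h : qviOp c F (updateEntry u i l t) i l ≤ qviOp c F (updateEntry v i l s) i l) : t ≤ s := by
  by_contra! hlt
  have hgap := min_mul_sub_le_qviOp_updateEntry (c := c) hF huv i l hlt.le
  have hpos : 0 < min γ 1 * (t - s) := mul_pos (lt_min hγ one_pos) (sub_pos.2 hlt)
  linarith

theorem exists_qviOp_updateEntry_eq (hγ : 0 < γ) (hF : IsMonotoneSystem γ F)
    (hFcont : Continuous F) (c κ : ℝ) (w : Fin d → Fin N → ℝ) (i : Fin d) (l : Fin N) :
    ∃ t, qviOp c F (updateEntry w i l t) i l = κ := by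
  have hcont : Continuous fun t => qviOp c F (updateEntry w i l t) i l := by
    simp only [qviOp, Mop_updateEntry, updateEntry_apply_self]
    exact ((continuous_apply l).comp ((continuous_apply i).comp
      (hFcont.comp (continuous_updateEntry w i l)))).min (continuous_id.sub continuous_const)
  exact hcont.surjective_of_forall_mul_sub_le (lt_min hγ one_pos)
    (fun s t hst => min_mul_sub_le_qviOp_updateEntry hF le_rfl i l hst) κ

theorem exists_monotone_entrywise_solution (hγ : 0 < γ) (hF : IsMonotoneSystem γ F)
    (hFcont : Continuous F) (c κ : ℝ) :
    ∃ T : (Fin d → Fin N → ℝ) → Fin d → Fin N → ℝ,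
      Monotone T ∧ ∀ w i l, qviOp c F (updateEntry w i l (T w i l)) i l = κ := by
  choose T hT using exists_qviOp_updateEntry_eq hγ hF hFcont c κ
  refine ⟨T, fun u v huv i l => ?_, hT⟩
  exact le_of_qviOp_updateEntry_le (c := c) (i := i) (l := l) hγ hF huv (by rw [hT, hT])

theorem le_qviOp_const (hd : 2 ≤ d) (hF : IsMonotoneSystem γ F) (hκc : κ ≤ c) {R : ℝ}
    (hR0 : 0 ≤ R) (hR : supNorm (F 0) + κ ≤ γ * R) (i : Fin d) (l : Fin N) :
    κ ≤ qviOp c F (fun _ _ => R) i l := by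
  have hFR := hF.mul_le_sub_of_sub_eq_const hR0 (u := fun _ _ => R) (v := 0)
    (fun _ _ => sub_zero R) i l
  rw [qviOp, Mop_const hd]
  refine le_min ?_ (by linarith)
  linarith [neg_abs_le (F 0 i l), abs_le_supNorm (F 0) i l]

theorem qviOp_neg_const_le (hF : IsMonotoneSystem γ F) (hκ : 0 ≤ κ) {R : ℝ}
    (hR0 : 0 ≤ R) (hR : supNorm (F 0) + κ ≤ γ * R) (i : Fin d) (l : Fin N) :
    qviOp c F (fun _ _ => -R) i l ≤ κ := by
  have hFR := hF.mul_le_sub_of_sub_eq_const hR0 (u := 0) (v := fun _ _ => -R)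
    (fun _ _ => by simp) i l
  refine (min_le_left _ _).trans ?_
  linarith [le_abs_self (F 0 i l), abs_le_supNorm (F 0) i l]

theorem exists_qviOp_eq (hd : 2 ≤ d) (hγ : 0 < γ) (hF : IsMonotoneSystem γ F)
    (hFcont : Continuous F) (hκ : 0 ≤ κ) (hκc : κ ≤ c) :
    ∃ w, (∀ i l, qviOp c F w i l = κ) ∧ supNorm w ≤ (supNorm (F 0) + κ) / γ := by
  set R := (supNorm (F 0) + κ) / γ
  have hR0 : 0 ≤ R := div_nonneg (add_nonneg (supNorm_nonneg _) hκ) hγ.le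
  have hR : supNorm (F 0) + κ ≤ γ * R := (mul_div_cancel₀ _ hγ.ne').ge
  obtain ⟨T, hTmono, hT⟩ := exists_monotone_entrywise_solution hγ hF hFcont c κ
  obtain ⟨w, ⟨hlo, hhi⟩, hfix⟩ := hTmono.exists_isFixedPt_Icc
    (a := fun _ _ => -R) (b := fun _ _ => R) (fun _ _ => by linarith)
    (fun i l => le_of_qviOp_updateEntry_le hγ hF le_rfl <| by
      rw [hT, updateEntry_eq_self]; exact qviOp_neg_const_le hF hκ hR0 hR i l)
    (fun i l => le_of_qviOp_updateEntry_le hγ hF le_rfl <| by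
      rw [hT, updateEntry_eq_self]; exact le_qviOp_const hd hF hκc hR0 hR i l)
  refine ⟨w, fun i l => ?_, supNorm_le hR0 fun i l => abs_le.2 ⟨hlo i l, hhi i l⟩⟩
  simpa [hfix] using hT w i l

theorem le_of_qviOp_le_of_le_qviOp (hd : 2 ≤ d) (hγ : 0 < γ) (hF : IsMonotoneSystem γ F)
    (hκc : κ < c) {u v : Fin d → Fin N → ℝ} (hu : ∀ i l, qviOp c F u i l ≤ κ)
    (hv : ∀ i l, κ ≤ qviOp c F v i l) : u ≤ v := by
  by_contra h
  obtain ⟨i₀, l₀, h₀⟩ : ∃ i l, v i l < u i l := by simpa [Pi.le_def] using h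
  have : Nonempty (Fin d × Fin N) := ⟨(i₀, l₀)⟩
  obtain ⟨⟨i, l⟩, hmax⟩ := Finite.exists_max_lex
    (fun p : Fin d × Fin N => u p.1 p.2 - v p.1 p.2) (fun p => u p.1 p.2)
  have hm : 0 < u i l - v i l := by linarith [(hmax (i₀, l₀)).1]
  rcases min_le_iff.1 (hu i l) with hFu | hMu
  · have hFv : κ ≤ F v i l := (hv i l).trans (min_le_left _ _)
    have := hF u v i l (fun j k => (hmax (j, k)).1) hm.le
    linarith [mul_pos hγ hm]
  · obtain ⟨j, hji, hj⟩ := exists_Mop_eq hd c u i l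
    have hvj := sub_le_Mop c v l hji
    have hMv : κ ≤ v i l - Mop c v i l := (hv i l).trans (min_le_right _ _)
    have hdiff : u j l - v j l = u i l - v i l := le_antisymm (hmax (j, l)).1 (by linarith)
    linarith [(hmax (j, l)).2 hdiff]

end QVI

theorem strict_supersolution_exists_unique_general {N d : ℕ} (hd : 2 ≤ d)
    (γ : ℝ) (hγ : 0 < γ)
    (F : (Fin d → Fin N → ℝ) → Fin d → Fin N → ℝ)
    (hFcont : Continuous F) (hFmono : IsMonotoneSystem γ F)
    (c : ℝ) (κ : ℝ) (hκ0 : 0 < κ) (hκc : κ < c) :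
    ∃ w : Fin d → Fin N → ℝ,
      (∀ i l, min (F w i l) (w i l - Mop c w i l) = κ) ∧
      supNorm w ≤ (supNorm (F 0) + κ) / γ ∧
      ∀ w' : Fin d → Fin N → ℝ,
        (∀ i l, min (F w' i l) (w' i l - Mop c w' i l) = κ) → w' = w := by
  obtain ⟨w, hw, hbound⟩ := exists_qviOp_eq hd hγ hFmono hFcont hκ0.le hκc.le
  refine ⟨w, hw, hbound, fun w' hw' => le_antisymm ?_ ?_⟩
  · exact le_of_qviOp_le_of_le_qviOp hd hγ hFmono hκc (fun i l => (hw' i l).le)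
      (fun i l => (hw i l).ge)
  · exact le_of_qviOp_le_of_le_qviOp hd hγ hFmono hκc (fun i l => (hw i l).le)
      (fun i l => (hw' i l).ge)

/-- Existence and uniqueness of strict supersolutions with parameter `κ ∈ (0, c)`. -/
theorem strict_supersolution_exists_unique {N d : ℕ} (hN : 1 ≤ N) (hd : 2 ≤ d)
    (γ : ℝ) (hγ : 0 < γ)
    (F : (Fin d → Fin N → ℝ) → Fin d → Fin N → ℝ)
    (hFcont : Continuous F) (hFmono : IsMonotoneSystem γ F)
    (c : ℝ) (hc : 0 < c) (κ : ℝ) (hκ0 : 0 < κ) (hκc : κ < c) :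
    ∃ w : Fin d → Fin N → ℝ,
      (∀ i l, min (F w i l) (w i l - Mop c w i l) = κ) ∧
      supNorm w ≤ (supNorm (F 0) + κ) / γ ∧
      ∀ w' : Fin d → Fin N → ℝ,
        (∀ i l, min (F w' i l) (w' i l - Mop c w' i l) = κ) → w' = w :=
  strict_supersolution_exists_unique_general hd γ hγ F hFcont hFmono c κ hκ0 hκc
end
end
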